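/- arXiv:2503.16155 — 2 statements merged into one kernel-verified Lean document; each statement's English description precedes it below -/
import Mathlib

section
/- For any integers d ≥ 1 and n ≥ 2, the polynomial (f_d)^n = (1 + t + … + t^d)^n is strictly unimodal. -/
open Polynomial

/-- `fpoly d` is the polynomial `f_d = 1 + t + t^2 + ⋯ + t^d`. -/
noncomputable def fpoly (d : ℕ) : Polynomial ℝ :=
  ∑ i ∈ Finset.range (d + 1), Polynomial.X ^ i

/-- A sequence `a_0, …, a_d` is strictly unimodal if, for `d = 2m`,
`a_0 < a_1 < ⋯ < a_m > a_{m+1} > ⋯ > a_{2m}`, and for `d = 2m+1`,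
`a_0 < a_1 < ⋯ < a_m = a_{m+1} > a_{m+2} > ⋯ > a_{2m+1}`. -/
def StrictlyUnimodalSeq (d : ℕ) (a : ℕ → ℝ) : Prop :=
  (∀ i, i < d / 2 → a i < a (i + 1)) ∧
  (Odd d → a (d / 2) = a (d / 2 + 1)) ∧
  (∀ i, (d + 1) / 2 ≤ i → i < d → a (i + 1) < a i)

/-- The sequence `a` strictly increases on `[0, e]`, is constant on `[e, p]`,
and strictly decreases on `[p, D]`. -/
def IncConstDec (a : ℕ → ℝ) (e p D : ℕ) : Prop :=
  (∀ i, i < e → a i < a (i + 1)) ∧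
  (∀ i, e ≤ i → i < p → a i = a (i + 1)) ∧
  (∀ i, p ≤ i → i < D → a (i + 1) < a i)

/-!
The coefficients of `f_d ^ n` are palindromic, so it suffices that they increase strictly up to
the middle. Since `f_d * (X - 1) = X ^ (d + 1) - 1`, the coefficients of `f_d * g` have successive
differences `g_{k+1} - g_{k-d}`. Below the middle of `f_d * g`, either `k < d` and the difference
is `g_{k+1} > 0`, or the pair `k - d < k + 1`, after reflecting `k + 1` through the middle of `g`
if it lies past it, sits on the strictly increasing half of `g`. For `g = f_d` only the first case
occurs, which starts the induction at `n = 2`.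
-/

section Symmetric

variable {α : Type*} [Preorder α] {N : ℕ} {c : ℕ → α}

theorem lt_of_symm_of_lt_succ (hsym : ∀ j ≤ N, c j = c (N - j))
    (hinc : ∀ i < N / 2, c i < c (i + 1)) {u v : ℕ} (huv : u < v) (hsum : u + v < N) :
    c u < c v := by
  have hmono : StrictMonoOn c (Set.Iic (N / 2)) := strictMonoOn_Iic_of_lt_succ hinc
  rcases le_or_gt v (N / 2) with hv | hv
  · exact hmono (Set.mem_Iic.2 (by omega)) hv huv
  · rw [hsym v (by omega)]
    exact hmono (Set.mem_Iic.2 (by omega)) (Set.mem_Iic.2 (by omega)) (by omega)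

theorem le_of_symm_of_lt_succ (hsym : ∀ j ≤ N, c j = c (N - j))
    (hinc : ∀ i < N / 2, c i < c (i + 1)) {u v : ℕ} (huv : u ≤ v) (hsum : u + v ≤ N) :
    c u ≤ c v := by
  rcases huv.eq_or_lt with rfl | huv
  · exact le_rfl
  rcases hsum.eq_or_lt with hsum | hsum
  · rw [hsym v (by omega), show N - v = u by omega]
  · exact (lt_of_symm_of_lt_succ hsym hinc huv hsum).le

end Symmetric

theorem strictlyUnimodalSeq_of_symm {N : ℕ} {c : ℕ → ℝ} (hsym : ∀ j ≤ N, c j = c (N - j))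
    (hinc : ∀ i < N / 2, c i < c (i + 1)) : StrictlyUnimodalSeq N c := by
  refine ⟨hinc, fun ⟨m, hm⟩ => ?_, fun i hi hiN => ?_⟩
  · rw [hsym (N / 2 + 1) (by omega), show N - (N / 2 + 1) = N / 2 by omega]
  · rw [hsym (i + 1) hiN]
    exact lt_of_symm_of_lt_succ hsym hinc (by omega) (by omega)

theorem coeff_fpoly (d i : ℕ) : (fpoly d).coeff i = if i ≤ d then 1 else 0 := by
  simp [fpoly, finsetSum_coeff, coeff_X_pow]

theorem natDegree_fpoly_le (d : ℕ) : (fpoly d).natDegree ≤ d :=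
  natDegree_le_iff_coeff_eq_zero.2 fun i hi => by simp [coeff_fpoly, not_le.2 hi]

theorem natDegree_fpoly_pow_le (d n : ℕ) : (fpoly d ^ n).natDegree ≤ n * d :=
  natDegree_pow_le_of_le n (natDegree_fpoly_le d)

theorem coeff_fpoly_pow_zero (d n : ℕ) : (fpoly d ^ n).coeff 0 = 1 := by
  simp [coeff_zero_eq_eval_zero, fpoly, eval_finsetSum]

theorem fpoly_mul_X_sub_one (d : ℕ) : fpoly d * (X - 1) = X ^ (d + 1) - 1 :=
  geom_sum_mul X (d + 1)

theorem coeff_fpoly_mul_succ_sub (d : ℕ) (g : ℝ[X]) (k : ℕ) :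
    (fpoly d * g).coeff (k + 1) - (fpoly d * g).coeff k
      = g.coeff (k + 1) - if d ≤ k then g.coeff (k - d) else 0 := by
  have h : fpoly d * g * (X - C 1) = X ^ (d + 1) * g - g := by
    rw [C_1, mul_right_comm, fpoly_mul_X_sub_one]
    ring
  have hk := congrArg (coeff · (k + 1)) h
  simp only [coeff_mul_X_sub_C, coeff_sub, coeff_X_pow_mul', mul_one,
    Nat.add_le_add_iff_right, Nat.add_sub_add_right] at hk
  linarith

theorem reflect_fpoly (d : ℕ) : reflect d (fpoly d) = fpoly d := by
  ext i
  rw [coeff_reflect, coeff_fpoly, coeff_fpoly]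
  by_cases h : i ≤ d
  · simp [revAt_le h, h]
  · rw [revAt_eq_self_of_lt (not_le.1 h)]

theorem reflect_fpoly_pow (d n : ℕ) : reflect (n * d) (fpoly d ^ n) = fpoly d ^ n := by
  induction n with
  | zero => simp
  | succ n ih =>
    rw [Nat.succ_mul, pow_succ,
      reflect_mul _ _ (natDegree_fpoly_pow_le d n) (natDegree_fpoly_le d), ih, reflect_fpoly]

theorem coeff_fpoly_pow_symm (d n : ℕ) :
    ∀ j ≤ n * d, (fpoly d ^ n).coeff j = (fpoly d ^ n).coeff (n * d - j) := by
  intro j hj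
  conv_lhs => rw [← reflect_fpoly_pow]
  rw [coeff_reflect, revAt_le hj]

theorem coeff_fpoly_mul_lt_succ {d N : ℕ} {g : ℝ[X]} (hdN : d ≤ N)
    (hpos : ∀ j ≤ N, 0 < g.coeff j)
    (hgap : ∀ j, 2 * j + d + 2 ≤ N → g.coeff j < g.coeff (j + d + 1))
    {k : ℕ} (hk : k < (N + d) / 2) :
    (fpoly d * g).coeff k < (fpoly d * g).coeff (k + 1) := by
  have hstep := coeff_fpoly_mul_succ_sub d g k
  split_ifs at hstep with hdk
  · obtain ⟨j, rfl⟩ := Nat.exists_eq_add_of_le' hdk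
    have := hgap j (by omega)
    rw [Nat.add_sub_cancel] at hstep
    linarith
  · have := hpos (k + 1) (by omega)
    linarith

theorem coeff_fpoly_pow_lt_succ {d n : ℕ} (hn : 2 ≤ n) :
    ∀ k < n * d / 2, (fpoly d ^ n).coeff k < (fpoly d ^ n).coeff (k + 1) := by
  induction n, hn using Nat.le_induction with
  | base =>
    intro k hk
    rw [pow_two]
    exact coeff_fpoly_mul_lt_succ le_rfl (fun j hj => by simp [coeff_fpoly, hj])
      (fun j hj => by omega) (by omega)
  | succ n hn ih =>
    intro k hk
    have hsym := coeff_fpoly_pow_symm d n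
    rw [pow_succ']
    refine coeff_fpoly_mul_lt_succ (N := n * d) (Nat.le_mul_of_pos_left d (by omega))
      (fun j hj => ?_) (fun j hj => lt_of_symm_of_lt_succ hsym ih (by omega) (by omega))
      (by rwa [Nat.succ_mul] at hk)
    calc (0 : ℝ) < (fpoly d ^ n).coeff 0 := by rw [coeff_fpoly_pow_zero]; exact one_pos
      _ ≤ (fpoly d ^ n).coeff j := le_of_symm_of_lt_succ hsym ih (Nat.zero_le j) (by omega)

theorem fpoly_pow_strictlyUnimodal_general (d n : ℕ) (hn : 2 ≤ n) :
    StrictlyUnimodalSeq (n * d) ((fpoly d ^ n).coeff) :=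
  strictlyUnimodalSeq_of_symm (coeff_fpoly_pow_symm d n) (coeff_fpoly_pow_lt_succ hn)

/-- For any `d ≥ 1` and `n ≥ 2`, the polynomial `(f_d)^n = (1 + t + ⋯ + t^d)^n`
is strictly unimodal. -/
theorem fpoly_pow_strictlyUnimodal (d n : ℕ) (hd : 1 ≤ d) (hn : 2 ≤ n) :
    StrictlyUnimodalSeq (n * d) ((fpoly d ^ n).coeff) :=
  fpoly_pow_strictlyUnimodal_general d n hn
end

section
/- Let n ≥ 2 and let 1 ≤ d_1 ≤ d_2 ≤ … ≤ d_n be integers with d_n > d_1 + … + d_{n-1}, and set e = d_1 + … + d_{n-1}. Then the set of indices i at which the coefficient of t^i in ∏_{i=1}^n f_{d_i} attains its maximum value is exactly {e, e+1, …, d_n}; in particular there are exactly d_n − (d_1 + … + d_{n-1}) + 1 indices attaining the maximal coefficient. -/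
/-!
The product is `p * f_D` with `p = ∏_{i < n-1} f_{d_i}` and `D = d_{n-1}`. The `j`-th coefficient
of `p * f_D` is the sum of the coefficients of `p` over the window `[j - D, j]`. Since `p` has
nonnegative coefficients, degree `e ≤ D` and positive constant and leading coefficients, this
window sum equals `p(1)` when the window contains `[0, e]`, i.e. when `e ≤ j ≤ D`, and is strictly
smaller otherwise: it then misses the coefficient at `0` or the one at `e`.
-/

open Polynomial

open Finset

lemma fpoly_coeff (d k : ℕ) : (fpoly d).coeff k = if k ≤ d then 1 else 0 := by
  simp [fpoly, coeff_X_pow]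

lemma fpoly_monic (d : ℕ) : (fpoly d).Monic :=
  monic_geom_sum_X d.succ_ne_zero

lemma fpoly_natDegree (d : ℕ) : (fpoly d).natDegree = d :=
  natDegree_eq_of_le_of_coeff_ne_zero
    (natDegree_le_iff_coeff_eq_zero.mpr fun k hk => by simp [fpoly_coeff, hk.not_ge])
    (by simp [fpoly_coeff])

-- `j - D` truncates at `0`, as the window should.
lemma coeff_mul_fpoly (p : ℝ[X]) (D j : ℕ) :
    (p * fpoly D).coeff j = ∑ i ∈ Icc (j - D) j, p.coeff i := by
  rw [coeff_mul, Nat.sum_antidiagonal_eq_sum_range_succ_mk]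
  simp only [fpoly_coeff, mul_ite, mul_one, mul_zero]
  rw [← sum_filter]
  exact sum_congr (by ext i; simp only [mem_filter, mem_range, mem_Icc]; omega) fun _ _ => rfl

lemma coeff_mul_nonneg {R : Type*} [Semiring R] [PartialOrder R] [IsOrderedRing R] {p q : R[X]} (hp : ∀ i, 0 ≤ p.coeff i) (hq : ∀ i, 0 ≤ q.coeff i)
    (k : ℕ) : 0 ≤ (p * q).coeff k := by
  rw [coeff_mul]
  exact sum_nonneg fun x _ => mul_nonneg (hp x.1) (hq x.2)

lemma coeff_prod_nonneg {R ι : Type*} [CommSemiring R] [PartialOrder R] [IsOrderedRing R]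
    (s : Finset ι) (f : ι → R[X])
    (hf : ∀ i ∈ s, ∀ k, 0 ≤ (f i).coeff k) (k : ℕ) : 0 ≤ (∏ i ∈ s, f i).coeff k :=
  prod_induction f (fun p => ∀ k, 0 ≤ p.coeff k) (fun _ _ => coeff_mul_nonneg)
    (fun k => by rw [coeff_one]; split_ifs <;> simp) hf k

section SumOverSupport

variable {ι M : Type*} [AddCommMonoid M] {f : ι → M} {s t : Finset ι}

lemma sum_eq_sum_inter_of_eq_zero_off [DecidableEq ι] (hoff : ∀ i ∉ t, f i = 0) :
    ∑ i ∈ s, f i = ∑ i ∈ s ∩ t, f i := by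
  rw [← sum_inter_add_sum_sdiff s t f, sum_eq_zero fun i hi => hoff i (mem_sdiff.mp hi).2, add_zero]

variable [PartialOrder M] [IsOrderedCancelAddMonoid M]

lemma sum_le_sum_of_eq_zero_off (hoff : ∀ i ∉ t, f i = 0) (hf : ∀ i ∈ t, 0 ≤ f i) :
    ∑ i ∈ s, f i ≤ ∑ i ∈ t, f i := by
  classical
  rw [sum_eq_sum_inter_of_eq_zero_off hoff]
  exact sum_le_sum_of_subset_of_nonneg inter_subset_right fun i hi _ => hf i hi

lemma sum_lt_sum_of_eq_zero_off (hoff : ∀ i ∉ t, f i = 0) (hf : ∀ i ∈ t, 0 ≤ f i)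
    {i : ι} (hit : i ∈ t) (his : i ∉ s) (hpos : 0 < f i) :
    ∑ i ∈ s, f i < ∑ i ∈ t, f i := by
  classical
  rw [sum_eq_sum_inter_of_eq_zero_off hoff]
  exact sum_lt_sum_of_subset inter_subset_right hit (fun h => his (mem_inter.mp h).1) hpos
    fun j hj _ => hf j hj

end SumOverSupport

theorem setOf_coeff_mul_fpoly_maximal_eq_Icc {p : ℝ[X]} {D : ℕ} (hnn : ∀ i, 0 ≤ p.coeff i)
    (h0 : 0 < p.coeff 0) (hlead : 0 < p.leadingCoeff) (hD : p.natDegree ≤ D) :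
    {j | ∀ i, (p * fpoly D).coeff i ≤ (p * fpoly D).coeff j} = Set.Icc p.natDegree D := by
  set T := range (p.natDegree + 1)
  have hoff : ∀ i ∉ T, p.coeff i = 0 := fun i hi =>
    coeff_eq_zero_of_natDegree_lt (by simpa [T, Nat.lt_succ_iff] using hi)
  have hle : ∀ j, (p * fpoly D).coeff j ≤ ∑ i ∈ T, p.coeff i := fun j => by
    rw [coeff_mul_fpoly]
    exact sum_le_sum_of_eq_zero_off hoff fun i _ => hnn i
  have heq : ∀ j ∈ Set.Icc p.natDegree D, (p * fpoly D).coeff j = ∑ i ∈ T, p.coeff i := by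
    rintro j ⟨hej, hjD⟩
    rw [coeff_mul_fpoly]
    refine (sum_subset (fun i hi => ?_) fun i _ hi => hoff i hi).symm
    simp only [T, mem_range, mem_Icc] at hi ⊢
    omega
  have hlt : ∀ j ∉ Set.Icc p.natDegree D, (p * fpoly D).coeff j < ∑ i ∈ T, p.coeff i := by
    intro j hj
    rw [coeff_mul_fpoly]
    rcases Nat.lt_or_ge j p.natDegree with hje | hej
    · exact sum_lt_sum_of_eq_zero_off hoff (fun i _ => hnn i) (self_mem_range_succ _)
        (by simp only [mem_Icc]; omega) hlead
    · have hDj : D < j := by simp only [Set.mem_Icc, not_and, not_le] at hj; exact hj hej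
      exact sum_lt_sum_of_eq_zero_off hoff (fun i _ => hnn i) (by simp [T])
        (by simp only [mem_Icc]; omega) h0
  ext j
  refine ⟨fun hj => ?_, fun hj i => heq j hj ▸ hle i⟩
  by_contra hnot
  exact (hlt j hnot).not_ge (heq _ ⟨le_rfl, hD⟩ ▸ hj _)

theorem prod_fpoly_maximizers_general (n : ℕ) (hn : 2 ≤ n) (d : ℕ → ℕ)
    (h : (∑ i ∈ Finset.range (n - 1), d i) < d (n - 1)) :
    {j : ℕ | ∀ i, (∏ i ∈ Finset.range n, fpoly (d i)).coeff i ≤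
        (∏ i ∈ Finset.range n, fpoly (d i)).coeff j} =
      Set.Icc (∑ i ∈ Finset.range (n - 1), d i) (d (n - 1)) ∧
    {j : ℕ | ∀ i, (∏ i ∈ Finset.range n, fpoly (d i)).coeff i ≤
        (∏ i ∈ Finset.range n, fpoly (d i)).coeff j}.ncard =
      d (n - 1) - (∑ i ∈ Finset.range (n - 1), d i) + 1 := by
  obtain ⟨m, rfl⟩ : ∃ m, n = m + 1 := ⟨n - 1, by omega⟩
  simp only [Nat.add_sub_cancel] at h ⊢
  have hmonic : (∏ i ∈ range m, fpoly (d i)).Monic :=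
    monic_prod_of_monic _ _ fun i _ => fpoly_monic (d i)
  have hdeg : (∏ i ∈ range m, fpoly (d i)).natDegree = ∑ i ∈ range m, d i := by
    simp [natDegree_prod_of_monic _ _ fun i _ => fpoly_monic (d i), fpoly_natDegree]
  have hset := setOf_coeff_mul_fpoly_maximal_eq_Icc (D := d m)
    (coeff_prod_nonneg _ _ fun i _ k => by rw [fpoly_coeff]; split_ifs <;> norm_num)
    (by simp [coeff_zero_prod, fpoly_coeff]) (by rw [hmonic.leadingCoeff]; exact one_pos)
    (hdeg ▸ h.le)
  rw [prod_range_succ, hset, hdeg]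
  exact ⟨rfl, by rw [Set.ncard_Icc_nat]; omega⟩

/-- If `n ≥ 2`, `1 ≤ d_1 ≤ ⋯ ≤ d_n` and `d_n > e := d_1 + ⋯ + d_{n-1}`, then the set of
indices at which the coefficients of `∏_{i=1}^n f_{d_i}` attain their maximum is exactly
`{e, e+1, …, d_n}`; in particular there are exactly `d_n - e + 1` such indices. -/
theorem prod_fpoly_maximizers (n : ℕ) (hn : 2 ≤ n) (d : ℕ → ℕ)
    (hd1 : ∀ i < n, 1 ≤ d i) (hmono : ∀ i j, i ≤ j → j < n → d i ≤ d j)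
    (h : (∑ i ∈ Finset.range (n - 1), d i) < d (n - 1)) :
    {j : ℕ | ∀ i, (∏ i ∈ Finset.range n, fpoly (d i)).coeff i ≤
        (∏ i ∈ Finset.range n, fpoly (d i)).coeff j} =
      Set.Icc (∑ i ∈ Finset.range (n - 1), d i) (d (n - 1)) ∧
    {j : ℕ | ∀ i, (∏ i ∈ Finset.range n, fpoly (d i)).coeff i ≤
        (∏ i ∈ Finset.range n, fpoly (d i)).coeff j}.ncard =
      d (n - 1) - (∑ i ∈ Finset.range (n - 1), d i) + 1 :=
  prod_fpoly_maximizers_general n hn d h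
end
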